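/- arXiv:1711.07560 — 2 statements merged into one kernel-verified Lean document; each statement's English description precedes it below -/
import Mathlib

section
/- Any symmetric bilinear form B on se(3) ≅ ℝ³ × ℝ³ satisfying the invariance condition B([s,s₁],s₂) + B(s₁,[s,s₂]) = 0 for all twists s, s₁, s₂ is of the form B((ω₁,v₁),(ω₂,v₂)) = -2α(ω₁·ω₂) + β(ω₁·v₂ + v₁·ω₂) for some real α, β. -/
open Matrix

/-- The Lie bracket on `se(3) ≅ ℝ³ × ℝ³`. -/
def seBracket (a b : (Fin 3 → ℝ) × (Fin 3 → ℝ)) : (Fin 3 → ℝ) × (Fin 3 → ℝ) :=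
  (crossProduct a.1 b.1, crossProduct a.1 b.2 + crossProduct a.2 b.1)

/-!
Split `B` into its blocks on `ω`- and `v`-components. Invariance under brackets with twists
`(x, 0)` says that the `ωω`, `ωv` and `vv` blocks are invariant under `so(3) ≅ (ℝ³, ⨯₃)`, and
an `so(3)`-invariant bilinear form on `ℝ³` is a multiple of the dot product: evaluated on
standard basis vectors, with `eᵢ₊₁ ⨯₃ eᵢ₊₂ = eᵢ`, invariance kills the off-diagonal entries and
identifies the diagonal ones. Invariance under `(0, x)` gives `B (0, x ⨯₃ y) (0, z) = 0`, so the
`vv` block vanishes, and the `vω` block is the transpose of the `ωv` block by symmetry.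
-/

section CrossProduct

variable {R : Type*} [CommRing R]

theorem single_add_one_cross_single_add_two (i : Fin 3) :
    (Pi.single (i + 1) 1 : Fin 3 → R) ⨯₃ Pi.single (i + 2) 1 = Pi.single i 1 := by
  fin_cases i <;> ext j <;> fin_cases j <;> simp [cross_apply]

theorem single_add_two_cross_single (i : Fin 3) :
    (Pi.single (i + 2) 1 : Fin 3 → R) ⨯₃ Pi.single i 1 = Pi.single (i + 1) 1 := by
  fin_cases i <;> ext j <;> fin_cases j <;> simp [cross_apply]

def IsCrossInvariant (F : LinearMap.BilinForm R (Fin 3 → R)) : Prop :=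
  ∀ x y z, F (x ⨯₃ y) z + F y (x ⨯₃ z) = 0

namespace IsCrossInvariant

variable {F : LinearMap.BilinForm R (Fin 3 → R)} (hF : IsCrossInvariant F)
include hF

theorem apply_single_single_add_one (i : Fin 3) :
    F (Pi.single i 1) (Pi.single (i + 1) 1) = 0 := by
  simpa [single_add_one_cross_single_add_two] using
    hF (Pi.single (i + 1) 1) (Pi.single (i + 2) 1) (Pi.single (i + 1) 1)

theorem apply_single_add_one_single (i : Fin 3) :
    F (Pi.single (i + 1) 1) (Pi.single i 1) = 0 := by
  simpa [single_add_one_cross_single_add_two] using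
    hF (Pi.single (i + 1) 1) (Pi.single (i + 1) 1) (Pi.single (i + 2) 1)

theorem apply_single_add_one_self (i : Fin 3) :
    F (Pi.single (i + 1) 1) (Pi.single (i + 1) 1) = F (Pi.single i 1) (Pi.single i 1) := by
  have h := hF (Pi.single (i + 2) 1) (Pi.single i 1) (Pi.single (i + 1) 1)
  rw [single_add_two_cross_single, ← cross_anticomm, single_add_one_cross_single_add_two,
    map_neg] at h
  linear_combination h

theorem apply_single_self (i : Fin 3) :
    F (Pi.single i 1) (Pi.single i 1) = F (Pi.single 0 1) (Pi.single 0 1) := by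
  fin_cases i
  · rfl
  · exact hF.apply_single_add_one_self 0
  · exact (hF.apply_single_add_one_self 1).trans (hF.apply_single_add_one_self 0)

theorem apply_single_single_of_ne {i j : Fin 3} (hij : i ≠ j) :
    F (Pi.single i 1) (Pi.single j 1) = 0 := by
  obtain rfl | rfl : j = i + 1 ∨ i = j + 1 := by revert i j; decide
  exacts [hF.apply_single_single_add_one i, hF.apply_single_add_one_single j]

theorem eq_smul_dotProductBilin :
    F = F (Pi.single 0 1) (Pi.single 0 1) • dotProductBilin R R := by
  refine LinearMap.BilinForm.ext_basis (Pi.basisFun R (Fin 3)) fun i j => ?_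
  obtain rfl | hij := eq_or_ne i j
  · simp [dotProductBilin, hF.apply_single_self]
  · simp [dotProductBilin, hF.apply_single_single_of_ne hij, hij]

theorem apply_eq (x y : Fin 3 → R) : F x y = F (Pi.single 0 1) (Pi.single 0 1) * (x ⬝ᵥ y) :=
  LinearMap.congr_fun₂ hF.eq_smul_dotProductBilin x y

end IsCrossInvariant

end CrossProduct

theorem LinearMap.BilinForm.apply_mk_mk {R M N : Type*} [CommSemiring R]
    [AddCommMonoid M] [AddCommMonoid N] [Module R M] [Module R N]
    (B : LinearMap.BilinForm R (M × N)) (x₁ x₂ : M) (y₁ y₂ : N) :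
    B (x₁, y₁) (x₂, y₂) =
      B (x₁, 0) (x₂, 0) + B (x₁, 0) (0, y₂) + B (0, y₁) (x₂, 0) + B (0, y₁) (0, y₂) := by
  rw [← add_zero x₁, ← zero_add y₁, ← Prod.mk_add_mk,
    ← add_zero x₂, ← zero_add y₂, ← Prod.mk_add_mk]
  simp only [map_add, LinearMap.add_apply, add_zero, zero_add]
  ring

def IsAdInvariant (B : LinearMap.BilinForm ℝ ((Fin 3 → ℝ) × (Fin 3 → ℝ))) : Prop :=
  ∀ s s₁ s₂, B (seBracket s s₁) s₂ + B s₁ (seBracket s s₂) = 0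

namespace IsAdInvariant

variable {B : LinearMap.BilinForm ℝ ((Fin 3 → ℝ) × (Fin 3 → ℝ))} (hB : IsAdInvariant B)
include hB

theorem isCrossInvariant_inl_inl :
    IsCrossInvariant (B.compl₁₂ (LinearMap.inl ℝ _ _) (LinearMap.inl ℝ _ _)) := fun x y z => by
  simpa [seBracket] using hB (x, 0) (y, 0) (z, 0)

theorem isCrossInvariant_inl_inr :
    IsCrossInvariant (B.compl₁₂ (LinearMap.inl ℝ _ _) (LinearMap.inr ℝ _ _)) := fun x y z => by
  simpa [seBracket] using hB (x, 0) (y, 0) (0, z)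

theorem isCrossInvariant_inr_inr :
    IsCrossInvariant (B.compl₁₂ (LinearMap.inr ℝ _ _) (LinearMap.inr ℝ _ _)) := fun x y z => by
  simpa [seBracket] using hB (x, 0) (0, y) (0, z)

theorem apply_inr_cross_inr (x y z : Fin 3 → ℝ) : B (0, x ⨯₃ y) (0, z) = 0 := by
  simpa [seBracket, Prod.mk_zero_zero] using hB (0, x) (y, 0) (0, z)

theorem apply_inr_inr (v₁ v₂ : Fin 3 → ℝ) : B (0, v₁) (0, v₂) = 0 := by
  have h₀ : B (0, Pi.single 0 1) (0, Pi.single 0 1) = 0 := by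
    simpa only [single_add_one_cross_single_add_two] using
      hB.apply_inr_cross_inr (Pi.single (0 + 1) 1) (Pi.single (0 + 2) 1) (Pi.single 0 1)
  simpa [h₀] using hB.isCrossInvariant_inr_inr.apply_eq v₁ v₂

end IsAdInvariant

theorem invariant_forms_classification
    (B : LinearMap.BilinForm ℝ ((Fin 3 → ℝ) × (Fin 3 → ℝ)))
    (hsymm : ∀ x y, B x y = B y x)
    (hinv : ∀ s s₁ s₂, B (seBracket s s₁) s₂ + B s₁ (seBracket s s₂) = 0) :
    ∃ α β : ℝ, ∀ ω₁ v₁ ω₂ v₂ : Fin 3 → ℝ,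
      B (ω₁, v₁) (ω₂, v₂) = -2 * α * (ω₁ ⬝ᵥ ω₂) + β * (ω₁ ⬝ᵥ v₂) + β * (v₁ ⬝ᵥ ω₂) := by
  have hB : IsAdInvariant B := hinv
  have hω := hB.isCrossInvariant_inl_inl.apply_eq
  have hωv := hB.isCrossInvariant_inl_inr.apply_eq
  simp only [LinearMap.compl₁₂_apply, LinearMap.inl_apply, LinearMap.inr_apply] at hω hωv
  refine ⟨-B (Pi.single 0 1, 0) (Pi.single 0 1, 0) / 2, B (Pi.single 0 1, 0) (0, Pi.single 0 1),
    fun ω₁ v₁ ω₂ v₂ => ?_⟩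
  rw [LinearMap.BilinForm.apply_mk_mk, hsymm (0, v₁), hB.apply_inr_inr,
    hω ω₁ ω₂, hωv ω₁ v₂, hωv ω₂ v₁, dotProduct_comm ω₂ v₁]
  ring
end

section
/- For three vectors s₁, s₂, s₃ ∈ ℝ⁶ each satisfying sᵢᵀQ₀sᵢ = 0, the 3×3 Gram determinant satisfies det(JᵀQ₀J) = 2(s₁ᵀQ₀s₂)(s₂ᵀQ₀s₃)(s₃ᵀQ₀s₁), where J has columns s₁, s₂, s₃. Hence it vanishes iff at least one pair sᵢ, sⱼ (i≠j) is reciprocal (sᵢᵀQ₀sⱼ = 0). -/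
open Matrix

/-- The Klein form on `se(3) ≅ ℝ³ × ℝ³`. -/
def kleinForm (a b : (Fin 3 → ℝ) × (Fin 3 → ℝ)) : ℝ := a.1 ⬝ᵥ b.2 + a.2 ⬝ᵥ b.1

lemma kleinForm_comm (a b : (Fin 3 → ℝ) × (Fin 3 → ℝ)) :
    kleinForm a b = kleinForm b a := by
  simp [kleinForm, dotProduct_comm]; ring

theorem sylvester_three_lines (s : Fin 3 → (Fin 3 → ℝ) × (Fin 3 → ℝ))
    (hself : ∀ i, kleinForm (s i) (s i) = 0) :
    (Matrix.of fun i j => kleinForm (s i) (s j)).det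
      = 2 * kleinForm (s 0) (s 1) * kleinForm (s 1) (s 2) * kleinForm (s 2) (s 0) ∧
    ((Matrix.of fun i j => kleinForm (s i) (s j)).det = 0 ↔
      ∃ i j : Fin 3, i ≠ j ∧ kleinForm (s i) (s j) = 0) := by
  have hdet : (Matrix.of fun i j => kleinForm (s i) (s j)).det
      = 2 * kleinForm (s 0) (s 1) * kleinForm (s 1) (s 2) * kleinForm (s 2) (s 0) := by
    rw [Matrix.det_fin_three]
    simp only [Matrix.of_apply, hself, kleinForm_comm (s 1) (s 0),
      kleinForm_comm (s 2) (s 0), kleinForm_comm (s 2) (s 1)]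
    ring
  refine ⟨hdet, ?_⟩
  rw [hdet]
  constructor
  · intro h
    rcases mul_eq_zero.1 h with h | h
    · rcases mul_eq_zero.1 h with h | h
      · rcases mul_eq_zero.1 h with h | h
        · norm_num at h
        · exact ⟨0, 1, by decide, h⟩
      · exact ⟨1, 2, by decide, h⟩
    · exact ⟨2, 0, by decide, h⟩
  · rintro ⟨i, j, hij, h⟩
    fin_cases i <;> fin_cases j <;> simp_all [kleinForm_comm] <;>
      first
      | (rw [kleinForm_comm] at h; simp [h])
      | simp [h]
end
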